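/- Let g : Ω → [-∞, 0) be a negative plurisubharmonic function on an open set Ω ⊆ ℂⁿ, and let 0 < ε < 1. Then the function -(-g)^{1-ε} is plurisubharmonic on Ω. -/

import Mathlib

open MeasureTheory Metric Filter Topology Complex Real

noncomputable section

/-- `ℂⁿ` as a Euclidean space. -/
abbrev Cn (n : ℕ) := EuclideanSpace ℂ (Fin n)

/-- A point of the circle of radius `r` and direction `v` around `a`. -/
def circPt {n : ℕ} (a : Cn n) (v : Cn n) (r θ : ℝ) : Cn n :=
  a + ((r : ℂ) * Complex.exp (θ * Complex.I)) • v

/-- Plurisubharmonicity for `EReal`-valued functions on `Ω ⊆ ℂⁿ`: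
upper semicontinuity together with the sub-mean value inequality on complex
lines, expressed via truncations `max (f ·) (-m)`. -/
def PshE {n : ℕ} (Ω : Set (Cn n)) (f : Cn n → EReal) : Prop :=
  UpperSemicontinuousOn f Ω ∧
    ∀ m : ℝ, ∀ a ∈ Ω, ∀ v : Cn n, ∀ r : ℝ, 0 < r →
      (∀ θ : ℝ, circPt a v r θ ∈ Ω) →
      (max (f a) ((-m : ℝ) : EReal)).toReal ≤
        (2 * π)⁻¹ * ∫ θ in (0:ℝ)..(2 * π), (max (f (circPt a v r θ)) ((-m : ℝ) : EReal)).toReal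

/-- Plurisubharmonicity for real-valued (e.g. smooth) functions:
the sub-mean value inequality on complex lines. -/
def PshR {n : ℕ} (Ω : Set (Cn n)) (f : Cn n → ℝ) : Prop :=
  ∀ a ∈ Ω, ∀ v : Cn n, ∀ r : ℝ, 0 < r →
    (∀ θ : ℝ, circPt a v r θ ∈ Ω) →
    f a ≤ (2 * π)⁻¹ * ∫ θ in (0:ℝ)..(2 * π), f (circPt a v r θ)

/-- The locus set `L_g` of a function `g` on `Ω`: the points of `Ω` near which `g`
is unbounded below in every neighborhood. -/
def locus {n : ℕ} (Ω : Set (Cn n)) (g : Cn n → EReal) : Set (Cn n) :=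
  {z ∈ Ω | ∀ V ∈ 𝓝 z, ∀ m : ℝ, ∃ w ∈ V ∩ Ω, g w < (m : EReal)}

/-- The pole set `P_g = {g = -∞}` inside `Ω`. -/
def poles {n : ℕ} (Ω : Set (Cn n)) (g : Cn n → EReal) : Set (Cn n) :=
  {z ∈ Ω | g z = ⊥}

/-! With `p = 1 - ε ∈ (0, 1)`, the function `h t = -(-t) ^ p` is continuous, increasing and convex
on `(-∞, 0]`. Upper semicontinuity survives composition with `h` since `{h ∘ g < c} = {g < h⁻¹ c}`.
For the sub-mean value inequality, truncation commutes with `h`: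
`max (h ∘ g) (-m) = h (max g (-M))` with `M = m ^ (1 / p)`, so the truncated sub-mean value
inequality of `g`, monotonicity of `h` and Jensen's inequality give
`h (g_M a) ≤ h (avg g_M) ≤ avg (h ∘ g_M)`. For `m ≤ 0` both sides equal `-m`. -/

def negRpow (p x : ℝ) : ℝ := -(-x) ^ p

namespace negRpow

variable {p : ℝ}

lemma strictMonoOn (hp : 0 < p) : StrictMonoOn (negRpow p) (Set.Iic 0) :=
  fun _ _ _ hy hxy => neg_lt_neg <| Real.rpow_lt_rpow (neg_nonneg.2 hy) (neg_lt_neg hxy) hp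

lemma convexOn (hp0 : 0 ≤ p) (hp1 : p ≤ 1) : ConvexOn ℝ (Set.Iic 0) (negRpow p) := by
  refine ⟨convex_Iic 0, fun x hx y hy a b ha hb hab => ?_⟩
  have := (Real.concaveOn_rpow hp0 hp1).2 (Set.mem_Ici.2 (neg_nonneg.2 hx))
    (Set.mem_Ici.2 (neg_nonneg.2 hy)) ha hb hab
  simp only [negRpow, smul_eq_mul] at this ⊢
  rw [show a * -x + b * -y = -(a * x + b * y) by ring] at this
  linarith

lemma continuous (hp : 0 ≤ p) : Continuous (negRpow p) :=
  ((Real.continuous_rpow_const hp).comp continuous_neg).neg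

lemma neg_of_neg {x : ℝ} (hx : x < 0) : negRpow p x < 0 :=
  neg_neg_of_pos (Real.rpow_pos_of_pos (neg_pos.2 hx) p)

lemma neg_rpow_inv (hp : p ≠ 0) {c : ℝ} (hc : 0 ≤ c) : negRpow p (-c ^ p⁻¹) = -c := by
  rw [negRpow, neg_neg, Real.rpow_inv_rpow hc hp]

end negRpow

def negRpowE (p : ℝ) (x : EReal) : EReal := if x = ⊥ then ⊥ else (negRpow p x.toReal : EReal)

namespace negRpowE

variable {p : ℝ}

@[simp] lemma bot : negRpowE p ⊥ = ⊥ := if_pos rfl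

@[simp] lemma coe (t : ℝ) : negRpowE p t = negRpow p t := by
  rw [negRpowE, if_neg (EReal.coe_ne_bot t), EReal.toReal_coe]

lemma lt_zero {x : EReal} (hx : x < 0) : negRpowE p x < 0 := by
  induction x with
  | bot => simp
  | coe t =>
    exact (coe t).trans_lt (EReal.coe_lt_coe_iff.2 (negRpow.neg_of_neg (by exact_mod_cast hx)))
  | top => simp at hx

lemma lt_coe_iff (hp : 0 < p) {x : EReal} (hx : x < 0) {c : ℝ} (hc : c ≤ 0) :
    negRpowE p x < c ↔ x < ((-(-c) ^ p⁻¹ : ℝ) : EReal) := by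
  induction x with
  | bot => exact iff_of_true (bot (p := p) ▸ EReal.bot_lt_coe c) (EReal.bot_lt_coe _)
  | coe t =>
    have hc' : -(-c) ^ p⁻¹ ≤ 0 := neg_nonpos.2 (Real.rpow_nonneg (neg_nonneg.2 hc) _)
    conv_lhs => rw [← neg_neg c, ← negRpow.neg_rpow_inv hp.ne' (neg_nonneg.2 hc)]
    rw [coe, EReal.coe_lt_coe_iff, EReal.coe_lt_coe_iff,
      (negRpow.strictMonoOn hp).lt_iff_lt (Set.mem_Iic.2 (by exact_mod_cast hx.le)) hc']
  | top => simp at hx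

lemma toReal_max (hp : 0 < p) {x : EReal} (hx : x < 0) {M : ℝ} (hM : 0 ≤ M) :
    (max (negRpowE p x) (negRpow p (-M) : EReal)).toReal =
      negRpow p (max x ((-M : ℝ) : EReal)).toReal := by
  induction x with
  | bot => simp
  | coe t =>
    have ht : t ≤ 0 := by exact_mod_cast hx.le
    rw [coe, ← EReal.coe_strictMono.monotone.map_max, ← EReal.coe_strictMono.monotone.map_max,
      EReal.toReal_coe, EReal.toReal_coe,
      (negRpow.strictMonoOn hp).monotoneOn.map_max ht (by simpa using hM)]
  | top => simp at hx

end negRpowE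

lemma UpperSemicontinuousOn.negRpowE {α : Type*} [TopologicalSpace α] {f : α → EReal}
    {s : Set α} (hf : UpperSemicontinuousOn f s) (hneg : ∀ z ∈ s, f z < 0) {p : ℝ} (hp : 0 < p) :
    UpperSemicontinuousOn (fun z => negRpowE p (f z)) s := by
  intro z hz y hy
  obtain ⟨c, hzc, hcy⟩ := EReal.exists_between_coe_real (lt_min hy (negRpowE.lt_zero (hneg z hz)))
  have hc : c ≤ 0 := by exact_mod_cast (hcy.trans_le (min_le_right _ _)).le
  filter_upwards [hf z hz _ ((negRpowE.lt_coe_iff hp (hneg z hz) hc).1 hzc), self_mem_nhdsWithin]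
    with w hw hws
  exact ((negRpowE.lt_coe_iff hp (hneg w hws) hc).2 hw).trans (hcy.trans_le (min_le_left _ _))

lemma ConvexOn.le_average_comp_of_le_average {α : Type*} [MeasurableSpace α] {μ : Measure α}
    [IsFiniteMeasure μ] [NeZero μ] {φ : ℝ → ℝ} {s : Set ℝ} (hφ : ConvexOn ℝ s φ)
    (hφm : MonotoneOn φ s) (hφc : ContinuousOn φ s) (hs : IsClosed s) {G : α → ℝ}
    (hGs : ∀ᵐ θ ∂μ, G θ ∈ s) (hG : Integrable G μ) (hφG : Integrable (φ ∘ G) μ) {x : ℝ}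
    (hx : x ∈ s) (hxG : x ≤ ⨍ θ, G θ ∂μ) : φ x ≤ ⨍ θ, φ (G θ) ∂μ :=
  (hφm hx (hφ.1.average_mem hs hGs hG) hxG).trans (hφ.map_average_le hφc hs hGs hG hφG)

lemma EReal.toReal_max_coe_mem_Icc {x : EReal} (hx : x < 0) {M : ℝ} (hM : 0 ≤ M) :
    (max x ((-M : ℝ) : EReal)).toReal ∈ Set.Icc (-M) 0 := by
  induction x with
  | bot => simpa using hM
  | coe t =>
    rw [← EReal.coe_strictMono.monotone.map_max, EReal.toReal_coe]
    exact ⟨le_max_right _ _, max_le (by exact_mod_cast hx.le) (by linarith)⟩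
  | top => simp at hx

lemma EReal.toReal_max_coe_of_nonpos {x : EReal} (hx : x < 0) {m : ℝ} (hm : m ≤ 0) :
    (max x ((-m : ℝ) : EReal)).toReal = -m := by
  rw [max_eq_right (hx.le.trans (by exact_mod_cast neg_nonneg.2 hm)), EReal.toReal_coe]

lemma negRpowE.toReal_max_le_average {p : ℝ} (hp0 : 0 < p) (hp1 : p ≤ 1) {α : Type*}
    [MeasurableSpace α] {μ : Measure α} [IsFiniteMeasure μ] [NeZero μ] {x : EReal} (hx : x < 0)
    {F : α → EReal} (hF : Measurable F) (hFneg : ∀ θ, F θ < 0)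
    (hsub : ∀ M : ℝ, (max x ((-M : ℝ) : EReal)).toReal ≤
      ⨍ θ, (max (F θ) ((-M : ℝ) : EReal)).toReal ∂μ) (m : ℝ) :
    (max (negRpowE p x) ((-m : ℝ) : EReal)).toReal ≤
      ⨍ θ, (max (negRpowE p (F θ)) ((-m : ℝ) : EReal)).toReal ∂μ := by
  rcases le_or_gt m 0 with hm | hm
  · have hconst : ∀ θ, (max (negRpowE p (F θ)) ((-m : ℝ) : EReal)).toReal = -m := fun θ =>
      EReal.toReal_max_coe_of_nonpos (negRpowE.lt_zero (hFneg θ)) hm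
    simp only [hconst, average_const, EReal.toReal_max_coe_of_nonpos (negRpowE.lt_zero hx) hm,
      le_refl]
  set M := m ^ p⁻¹
  have hM : 0 ≤ M := Real.rpow_nonneg hm.le _
  set G := fun θ => (max (F θ) ((-M : ℝ) : EReal)).toReal
  have hGm : Measurable G := (hF.max measurable_const).ereal_toReal
  have hGs : ∀ θ, G θ ∈ Set.Icc (-M) 0 := fun θ => EReal.toReal_max_coe_mem_Icc (hFneg θ) hM
  have hFG : ∀ θ, (max (negRpowE p (F θ)) ((negRpow p (-M) : ℝ) : EReal)).toReal =
      negRpow p (G θ) := fun θ => negRpowE.toReal_max hp0 (hFneg θ) hM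
  have hmM : -m = negRpow p (-M) := (negRpow.neg_rpow_inv hp0.ne' hm.le).symm
  rw [hmM, negRpowE.toReal_max hp0 hx hM]
  simp only [hFG]
  have hφ := negRpow.strictMonoOn hp0
  have hφG : ∀ θ, negRpow p (G θ) ∈ Set.Icc (negRpow p (-M)) (negRpow p 0) := fun θ =>
    (hφ.monotoneOn.mono Set.Icc_subset_Iic_self).mapsTo_Icc (hGs θ)
  exact (negRpow.convexOn hp0.le hp1).le_average_comp_of_le_average hφ.monotoneOn
    (negRpow.continuous hp0.le).continuousOn isClosed_Iic (ae_of_all _ fun θ => (hGs θ).2)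
    (.of_mem_Icc _ _ hGm.aemeasurable (ae_of_all _ hGs))
    (.of_mem_Icc _ _ ((negRpow.continuous hp0.le).measurable.comp hGm).aemeasurable
      (ae_of_all _ hφG))
    (EReal.toReal_max_coe_mem_Icc hx hM).2 (hsub M)

lemma inv_two_pi_mul_integral_eq_setAverage (f : ℝ → ℝ) :
    (2 * π)⁻¹ * ∫ θ in (0 : ℝ)..(2 * π), f θ = ⨍ θ in Set.Ioc 0 (2 * π), f θ := by
  rw [setAverage_eq, Real.volume_real_Ioc_of_le (by positivity), sub_zero, smul_eq_mul,
    intervalIntegral.integral_of_le (by positivity)]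

instance : NeZero (volume.restrict (Set.Ioc (0 : ℝ) (2 * π))) :=
  ⟨by simp [Measure.restrict_eq_zero, Real.pi_pos]⟩

theorem neg_rpow_one_sub_eps_psh_general {n : ℕ} (Ω : Set (Cn n))
    (g : Cn n → EReal) (hpsh : PshE Ω g) (hneg : ∀ z ∈ Ω, g z < 0)
    (ε : ℝ) (hε0 : 0 < ε) (hε1 : ε < 1) :
    PshE Ω (fun z => if g z = ⊥ then (⊥ : EReal)
      else ((-((-(g z).toReal) ^ (1 - ε)) : ℝ) : EReal)) := by
  show PshE Ω (fun z => negRpowE (1 - ε) (g z))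
  have hp0 : 0 < 1 - ε := by linarith
  refine ⟨hpsh.1.negRpowE hneg hp0, fun m a ha v r hr hcirc => ?_⟩
  have hγ : Continuous (circPt a v r) := by unfold circPt; fun_prop
  have hgγ : Measurable fun θ => g (circPt a v r θ) :=
    (upperSemicontinuousOn_univ_iff.1 (hpsh.1.comp hγ.continuousOn fun θ _ => hcirc θ)).measurable
  have hsub := fun M => hpsh.2 M a ha v r hr hcirc
  simp only [inv_two_pi_mul_integral_eq_setAverage] at hsub ⊢
  exact negRpowE.toReal_max_le_average hp0 (by linarith) (hneg a ha) hgγ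
    (fun θ => hneg _ (hcirc θ)) hsub m

/-- If `g` is a negative plurisubharmonic function on an open
set `Ω ⊆ ℂⁿ` and `0 < ε < 1`, then `-(-g)^{1-ε}` (with value `-∞` where
`g = -∞`) is plurisubharmonic on `Ω`. -/
theorem neg_rpow_one_sub_eps_psh {n : ℕ} (Ω : Set (Cn n)) (hΩ : IsOpen Ω)
    (g : Cn n → EReal) (hpsh : PshE Ω g) (hneg : ∀ z ∈ Ω, g z < 0)
    (ε : ℝ) (hε0 : 0 < ε) (hε1 : ε < 1) :
    PshE Ω (fun z => if g z = ⊥ then (⊥ : EReal)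
      else ((-((-(g z).toReal) ^ (1 - ε)) : ℝ) : EReal)) :=
  neg_rpow_one_sub_eps_psh_general Ω g hpsh hneg ε hε0 hε1
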